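/- Suppose V is finite-dimensional over k, B is a nondegenerate symmetric contravariant k-bilinear form on V, and V is not semisimple as an A-module. Then V contains a nonzero totally isotropic A-submodule. -/

import Mathlib

/-!
If `V` has no nonzero totally isotropic submodule, every `A`-submodule `U` has an `A`-complement,
namely `U^⊥`: contravariance makes `U^⊥` an `A`-submodule, `U ⊓ U^⊥` is totally isotropic because
it lies in `U^⊥ ⊆ (U ⊓ U^⊥)^⊥`, so it vanishes, and a dimension count then gives `U ⊕ U^⊥ = V`.
Hence `V` is semisimple.
-/

open LinearMap (BilinForm)

namespace LinearMap.BilinForm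

section Contravariant

variable {k A V : Type*} [CommRing k] [Ring A] [Algebra k A] [AddCommGroup V] [Module k V]
  [Module A V] [IsScalarTower k A V]
  (B : BilinForm k V) {τ : A → A} (hB : ∀ (a : A) (v w : V), B (a • v) w = B v (τ a • w))
  (hrefl : B.IsRefl)

def orthogonalSubmodule (U : Submodule A V) : Submodule A V where
  toAddSubmonoid := (B.orthogonal (U.restrictScalars k)).toAddSubmonoid
  smul_mem' a v hv u hu := hrefl _ _ <| by
    rw [hB]
    exact hrefl _ _ (hv _ (U.smul_mem (τ a) hu))

@[simp]
theorem restrictScalars_orthogonalSubmodule (U : Submodule A V) :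
    (B.orthogonalSubmodule hB hrefl U).restrictScalars k = B.orthogonal (U.restrictScalars k) :=
  rfl

end Contravariant

theorem inf_orthogonal_le_orthogonal_inf_orthogonal {R M : Type*} [CommSemiring R]
    [AddCommMonoid M] [Module R M] (B : BilinForm R M) (W : Submodule R M) :
    W ⊓ B.orthogonal W ≤ B.orthogonal (W ⊓ B.orthogonal W) :=
  inf_le_right.trans (B.orthogonal_le inf_le_left)

section FiniteDimensional

variable {k A V : Type*} [Field k] [Ring A] [Algebra k A] [AddCommGroup V] [Module k V]
  [Module A V] [IsScalarTower k A V] [FiniteDimensional k V]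
  {B : BilinForm k V} {τ : A → A}

theorem isCompl_orthogonalSubmodule (hB : ∀ (a : A) (v w : V), B (a • v) w = B v (τ a • w))
    (hrefl : B.IsRefl)
    (hiso : ∀ N : Submodule A V, N.restrictScalars k ≤ B.orthogonal (N.restrictScalars k) → N = ⊥)
    (U : Submodule A V) :
    IsCompl U (B.orthogonalSubmodule hB hrefl U) := by
  have hcap : U ⊓ B.orthogonalSubmodule hB hrefl U = ⊥ := hiso _ <| by
    simpa using B.inf_orthogonal_le_orthogonal_inf_orthogonal (U.restrictScalars k)
  rw [← Submodule.isCompl_restrictScalars_iff k, restrictScalars_orthogonalSubmodule,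
    isCompl_orthogonal_iff_disjoint hrefl, disjoint_iff]
  simpa using congrArg (Submodule.restrictScalars k) hcap

theorem isSemisimpleModule_of_forall_isotropic_eq_bot
    (hB : ∀ (a : A) (v w : V), B (a • v) w = B v (τ a • w)) (hrefl : B.IsRefl)
    (hiso : ∀ N : Submodule A V, N.restrictScalars k ≤ B.orthogonal (N.restrictScalars k) → N = ⊥) :
    IsSemisimpleModule A V :=
  { exists_isCompl := fun U ↦ ⟨_, isCompl_orthogonalSubmodule hB hrefl hiso U⟩ }

end FiniteDimensional

end LinearMap.BilinForm

theorem exists_nonzero_isotropic_of_not_semisimple_general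
    (k A V : Type*) [Field k] [Ring A] [Algebra k A]
    [AddCommGroup V] [Module k V] [Module A V] [IsScalarTower k A V]
    [FiniteDimensional k V]
    (τ : A → A)
    (B : LinearMap.BilinForm k V)
    (hB : ∀ (a : A) (v w : V), B (a • v) w = B v (τ a • w))
    (hBsymm : ∀ v w : V, B v w = B w v)
    (hnss : ¬ IsSemisimpleModule A V) :
    ∃ U : Submodule A V, U ≠ ⊥ ∧
      U.restrictScalars k ≤ B.orthogonal (U.restrictScalars k) := by
  have hrefl : B.IsRefl := fun v w h ↦ (hBsymm w v).trans h
  by_contra! hiso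
  exact hnss <| LinearMap.BilinForm.isSemisimpleModule_of_forall_isotropic_eq_bot hB hrefl
    fun U hU ↦ by_contra fun hne ↦ hiso U hne hU

/-- Let `V` be finite-dimensional over `k` with a nondegenerate symmetric
contravariant `k`-bilinear form `B`.  If `V` is not semisimple as an `A`-module, then `V`
contains a nonzero totally isotropic `A`-submodule. -/
theorem exists_nonzero_isotropic_of_not_semisimple
    (k A V : Type*) [Field k] [Ring A] [Algebra k A]
    [AddCommGroup V] [Module k V] [Module A V] [IsScalarTower k A V]
    [FiniteDimensional k V]
    (τ : A → A)
    (hτadd : ∀ a b : A, τ (a + b) = τ a + τ b)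
    (hτmul : ∀ a b : A, τ (a * b) = τ b * τ a)
    (hτalg : ∀ c : k, τ (algebraMap k A c) = algebraMap k A c)
    (hτinv : ∀ a : A, τ (τ a) = a)
    (B : LinearMap.BilinForm k V)
    (hB : ∀ (a : A) (v w : V), B (a • v) w = B v (τ a • w))
    (hBnd : B.Nondegenerate)
    (hBsymm : ∀ v w : V, B v w = B w v)
    (hnss : ¬ IsSemisimpleModule A V) :
    ∃ U : Submodule A V, U ≠ ⊥ ∧
      U.restrictScalars k ≤ B.orthogonal (U.restrictScalars k) :=
  exists_nonzero_isotropic_of_not_semisimple_general k A V τ B hB hBsymm hnss
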